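/- Let (X, Y, ⟨·,·⟩) be a dual pairing, T ⊆ X × Y, n ≥ 1, and K_T defined by ((x,y),(u,v)) ∈ K_T iff (x,v),(u,y) ∈ T. Then the n-th Fitzpatrick function of K_T (with respect to the self-pairing on Z = X×Y) splits as φ⁽ⁿ⁾_{K_T}((x,y),(u,v)) = φ⁽ⁿ⁾_T(x,v) + φ⁽ⁿ⁾_T(u,y) for all x,u ∈ X, y,v ∈ Y. -/

import Mathlib

/-!
A chain `((xᵢ, yᵢ), (uᵢ, vᵢ))` of `K_T` is the same as two unrelated chains `(xᵢ, vᵢ)` and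
`(uᵢ, yᵢ)` of `T`. Expanding the pairing on `Z`, the telescoping sum of the `K_T`-chain at
`((x, y), (u, v))` is the sum of the first chain at `(x, v)` plus, after summation by parts, the
sum of the second chain run backwards at `(u, y)`. So `φ⁽ⁿ⁾_{K_T}` is a supremum of sums of two
independent families, which in `EReal` is the sum of the suprema (also when `T = ∅`: `⊥ + ⊥ = ⊥`).
-/


variable {X Y : Type*} [AddCommGroup X] [Module ℝ X] [AddCommGroup Y] [Module ℝ Y]

/-- The natural symmetric pairing on `Z = X × Y`: `z·w = ⟨x,v⟩ + ⟨u,y⟩`. -/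
def zPair (b : X →ₗ[ℝ] Y →ₗ[ℝ] ℝ) (z w : X × Y) : ℝ :=
  b z.1 w.2 + b w.1 z.2

/-- The operator `K_T : Z ⇒ Z`: `((x,y),(u,v)) ∈ K_T` iff `(x,v), (u,y) ∈ T`. -/
def KGraph (T : Set (X × Y)) : Set ((X × Y) × (X × Y)) :=
  {p | (p.1.1, p.2.2) ∈ T ∧ (p.2.1, p.1.2) ∈ T}

/-- The `n`-th Fitzpatrick function of `T ⊆ X × Y`. -/
noncomputable def fitz (b : X →ₗ[ℝ] Y →ₗ[ℝ] ℝ) (T : Set (X × Y)) (n : ℕ)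
    (x : X) (y : Y) : EReal :=
  sSup {r : EReal | ∃ c : ℕ → X × Y, (∀ i ∈ Finset.Icc 1 n, c i ∈ T) ∧
    r = ((b (x - (c 1).1) (c 1).2
        + ∑ i ∈ Finset.Icc 2 n, b ((c (i - 1)).1 - (c i).1) (c i).2
        + b (c n).1 y : ℝ) : EReal)}

/-- The `n`-th Fitzpatrick function of `K_T` with respect to the self-pairing on `Z`. -/
noncomputable def fitzK (b : X →ₗ[ℝ] Y →ₗ[ℝ] ℝ) (T : Set (X × Y)) (n : ℕ)
    (z w : X × Y) : EReal :=
  sSup {r : EReal | ∃ c : ℕ → (X × Y) × (X × Y),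
    (∀ i ∈ Finset.Icc 1 n, c i ∈ KGraph T) ∧
    r = ((zPair b (z - (c 1).1) (c 1).2
        + ∑ i ∈ Finset.Icc 2 n, zPair b ((c (i - 1)).1 - (c i).1) (c i).2
        + zPair b (c n).1 w : ℝ) : EReal)}

theorem EReal.sSup_add_sSup_le {A B : Set EReal} {z : EReal}
    (h : ∀ a ∈ A, ∀ b ∈ B, a + b ≤ z) : sSup A + sSup B ≤ z := by
  refine EReal.add_le_of_forall_lt fun a' ha' b' hb' => ?_
  obtain ⟨a, ha, ha'a⟩ := lt_sSup_iff.mp ha'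
  obtain ⟨b, hb, hb'b⟩ := lt_sSup_iff.mp hb'
  exact (add_le_add ha'a.le hb'b.le).trans (h a ha b hb)

namespace Finset

theorem sum_Icc_two_reflect {M : Type*} [AddCommMonoid M] (n : ℕ) (f : ℕ → ℕ → M) :
    ∑ i ∈ Icc 2 n, f (n + 1 - (i - 1)) (n + 1 - i) = ∑ i ∈ Icc 2 n, f i (i - 1) := by
  refine sum_nbij' (fun i => n + 2 - i) (fun i => n + 2 - i) ?_ ?_ ?_ ?_ ?_ <;>
    intro i hi <;> simp only [mem_Icc] at hi ⊢
  all_goals first | omega | congr 1 <;> omega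

theorem sum_Icc_two_sub {M : Type*} [AddCommGroup M] {n : ℕ} (hn : 1 ≤ n) (f : ℕ → M) :
    ∑ i ∈ Icc 2 n, (f i - f (i - 1)) = f n - f 1 := by
  induction n, hn using Nat.le_induction with
  | base => simp
  | succ n hn ih =>
    rw [sum_Icc_succ_top (by omega), ih, Nat.add_sub_cancel]
    abel

end Finset

open Finset

def chainValue {A B : Type*} [Sub A] (p : A → B → ℝ) (n : ℕ) (x : A) (y : B)
    (c : ℕ → A × B) : ℝ :=
  p (x - (c 1).1) (c 1).2 + ∑ i ∈ Icc 2 n, p ((c (i - 1)).1 - (c i).1) (c i).2 + p (c n).1 y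

def chainReverse {α : Type*} (n : ℕ) (c : ℕ → α) : ℕ → α := fun i => c (n + 1 - i)

section Chains

variable {A B α : Type*} {n : ℕ}

theorem chainValue_congr [Sub A] (p : A → B → ℝ) (hn : 1 ≤ n) {x : A} {y : B}
    {c c' : ℕ → A × B} (h : ∀ i ∈ Icc 1 n, c i = c' i) :
    chainValue p n x y c = chainValue p n x y c' := by
  have hstep : ∀ i ∈ Icc 2 n, c (i - 1) = c' (i - 1) ∧ c i = c' i := fun i hi => by
    simp only [mem_Icc] at hi
    exact ⟨h _ (by simp only [mem_Icc]; omega), h _ (by simp only [mem_Icc]; omega)⟩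
  unfold chainValue
  rw [h 1 (by simp [hn]), h n (by simp [hn])]
  congr 2
  exact sum_congr rfl fun i hi => by rw [(hstep i hi).1, (hstep i hi).2]

theorem chainReverse_mem {S : Set α} {c : ℕ → α} (hc : ∀ i ∈ Icc 1 n, c i ∈ S) :
    ∀ i ∈ Icc 1 n, chainReverse n c i ∈ S := fun i hi => by
  simp only [mem_Icc] at hi
  exact hc _ (by simp only [mem_Icc]; omega)

theorem chainReverse_chainReverse (c : ℕ → α) :
    ∀ i ∈ Icc 1 n, chainReverse n (chainReverse n c) i = c i := fun i hi => by
  simp only [mem_Icc] at hi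
  simp only [chainReverse, show n + 1 - (n + 1 - i) = i by omega]

end Chains

section Pairing

variable (b : X →ₗ[ℝ] Y →ₗ[ℝ] ℝ) {n : ℕ}

/-- Summation by parts. -/
theorem chainValue_chainReverse (hn : 1 ≤ n) (u : X) (y : Y) (c : ℕ → X × Y) :
    chainValue (b · ·) n u y (chainReverse n c) =
      b (c 1).1 (y - (c 1).2) + ∑ i ∈ Icc 2 n, b (c i).1 ((c (i - 1)).2 - (c i).2)
        + b u (c n).2 := by
  have hreflect := sum_Icc_two_reflect n fun i j => b ((c i).1 - (c j).1) (c j).2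
  have htelescope := sum_Icc_two_sub hn fun i => b (c i).1 (c i).2
  simp only [chainValue, chainReverse, show n + 1 - 1 = n by omega,
    show n + 1 - n = 1 by omega, hreflect]
  simp only [map_sub, LinearMap.sub_apply, sum_sub_distrib] at htelescope ⊢
  linarith

theorem chainValue_zPair (hn : 1 ≤ n) (x u : X) (y v : Y) (c : ℕ → (X × Y) × (X × Y)) :
    chainValue (zPair b) n (x, y) (u, v) c =
      chainValue (b · ·) n x v (fun i => ((c i).1.1, (c i).2.2))
        + chainValue (b · ·) n u y (chainReverse n fun i => ((c i).2.1, (c i).1.2)) := by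
  rw [chainValue_chainReverse b hn]
  simp only [chainValue, zPair, Prod.fst_sub, Prod.snd_sub, sum_add_distrib]
  ring

end Pairing

/-- `φ⁽ⁿ⁾_{K_T}((x,y),(u,v)) = φ⁽ⁿ⁾_T(x,v) + φ⁽ⁿ⁾_T(u,y)`. -/
theorem fitzK_eq_add (b : X →ₗ[ℝ] Y →ₗ[ℝ] ℝ) (T : Set (X × Y)) (n : ℕ)
    (hn : 1 ≤ n) (x u : X) (y v : Y) :
    fitzK b T n (x, y) (u, v) = fitz b T n x v + fitz b T n u y := by
  refine le_antisymm (sSup_le ?_) (EReal.sSup_add_sSup_le ?_)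
  · rintro _ ⟨c, hc, rfl⟩
    change ((chainValue (zPair b) n (x, y) (u, v) c : ℝ) : EReal) ≤ _
    rw [chainValue_zPair b hn, EReal.coe_add]
    exact add_le_add (le_sSup ⟨_, fun i hi => (hc i hi).1, rfl⟩)
      (le_sSup ⟨_, chainReverse_mem fun i hi => (hc i hi).2, rfl⟩)
  · rintro _ ⟨p, hp, rfl⟩ _ ⟨q, hq, rfl⟩
    let r := chainReverse n q
    let c : ℕ → (X × Y) × (X × Y) := fun i => (((p i).1, (r i).2), ((r i).1, (p i).2))
    refine le_sSup ⟨c, fun i hi => ⟨hp i hi, chainReverse_mem hq i hi⟩, ?_⟩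
    change _ = ((chainValue (zPair b) n (x, y) (u, v) c : ℝ) : EReal)
    rw [chainValue_zPair b hn, ← EReal.coe_add,
      chainValue_congr _ hn (chainReverse_chainReverse q)]
    rfl
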